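/- arXiv:2108.00943 — 2 statements merged into one kernel-verified Lean document; each statement's English description precedes it below -/
import Mathlib

section
/- For a partition λ = ⟨1^{m_1}, ..., k^{m_k}⟩ and every 0 ≤ d ≤ k, the d-th derivative of the partition polynomial satisfies f_λ^{(d)}(x) = Σ_{i=1}^{k} i^d m_i x^{i-d} − Σ_{j=0}^{d-1} S(d,j) x^{j-d} f_λ^{(j)}(x), where S(d,j) denotes the Stirling number of the second kind. -/
/-!
The `j`-th derivative of `x ^ i` is `i.descFactorial j * x ^ (i - j)`, so
`x ^ (j - d) * f_λ^{(j)}(x) = ∑ m_i * i.descFactorial j * x ^ (i - d)` for every `j`. Summing these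
against `S(d, j)` over `j ≤ d` and expanding powers into falling factorials,
`i ^ d = ∑ j ≤ d, S(d, j) * i.descFactorial j` with `S(d, d) = 1`, isolates `f_λ^{(d)}(x)`.
-/

/-- The partition polynomial of the partition `⟨1^(m 1), …, k^(m k)⟩`. -/
noncomputable def partitionPoly (k : ℕ) (m : ℕ → ℕ) (x : ℝ) : ℝ :=
  ∑ i ∈ Finset.Icc 1 k, (m i : ℝ) * x ^ i

/-- Stirling numbers of the second kind. -/
def stirling2 : ℕ → ℕ → ℕ
  | 0, 0 => 1
  | 0, _ + 1 => 0
  | _ + 1, 0 => 0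
  | n + 1, j + 1 => (j + 1) * stirling2 n (j + 1) + stirling2 n j

theorem stirling2_eq_stirlingSecond : ∀ n k, stirling2 n k = Nat.stirlingSecond n k
  | 0, 0 | 0, _ + 1 | _ + 1, 0 => rfl
  | n + 1, k + 1 => by
    rw [stirling2, Nat.stirlingSecond_succ_succ, stirling2_eq_stirlingSecond n,
      stirling2_eq_stirlingSecond n]

open Finset Polynomial

section
variable (R : Type*) [CommRing R]

theorem X_mul_descPochhammer (k : ℕ) :
    X * descPochhammer R k = descPochhammer R (k + 1) + (k : R[X]) * descPochhammer R k := by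
  rw [descPochhammer_succ_right]; ring

theorem X_pow_eq_sum_stirlingSecond_mul_descPochhammer (n : ℕ) :
    (X : R[X]) ^ n =
      ∑ k ∈ range (n + 1), (Nat.stirlingSecond n k : R[X]) * descPochhammer R k := by
  induction n with
  | zero => simp
  | succ n ih =>
    have shift : ∑ k ∈ range (n + 1), (k * Nat.stirlingSecond n k : R[X]) * descPochhammer R k =
        ∑ k ∈ range (n + 1),
          ((k + 1) * Nat.stirlingSecond n (k + 1) : R[X]) * descPochhammer R (k + 1) := by
      rw [sum_range_succ', sum_range_succ, Nat.stirlingSecond_eq_zero_of_lt n.lt_succ_self]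
      simp
    calc (X : R[X]) ^ (n + 1)
        = ∑ k ∈ range (n + 1), ((Nat.stirlingSecond n k : R[X]) * descPochhammer R (k + 1) +
            (k * Nat.stirlingSecond n k : R[X]) * descPochhammer R k) := by
          rw [pow_succ', ih, mul_sum]
          refine sum_congr rfl fun k _ => ?_
          rw [mul_left_comm, X_mul_descPochhammer]; ring
      _ = ∑ k ∈ range (n + 1), (Nat.stirlingSecond (n + 1) (k + 1) : R[X]) *
            descPochhammer R (k + 1) := by
          rw [sum_add_distrib, shift, ← sum_add_distrib]
          refine sum_congr rfl fun k _ => ?_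
          rw [Nat.stirlingSecond_succ_succ]; push_cast; ring
      _ = _ := by simp [sum_range_succ' _ (n + 1)]
end

theorem natCast_pow_eq_sum_stirlingSecond_mul_descFactorial {R : Type*} [CommRing R] (n d : ℕ) :
    (n : R) ^ d = ∑ k ∈ range (d + 1), (Nat.stirlingSecond d k : R) * n.descFactorial k := by
  simpa [descPochhammer_eval_eq_descFactorial, eval_finsetSum] using
    congrArg (eval (n : R)) (X_pow_eq_sum_stirlingSecond_mul_descPochhammer R d)

theorem natCast_descFactorial_mul_pow_sub {K : Type*} [DivisionRing K] (n k : ℕ) (x : K) :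
    (n.descFactorial k : K) * x ^ (n - k) = n.descFactorial k * x ^ ((n : ℤ) - k) := by
  rcases le_or_gt k n with hkn | hnk
  · rw [← Int.ofNat_sub hkn, zpow_natCast]
  · simp [Nat.descFactorial_eq_zero_iff_lt.2 hnk]

theorem iteratedDeriv_partitionPoly (k : ℕ) (m : ℕ → ℕ) (j : ℕ) (x : ℝ) :
    iteratedDeriv j (partitionPoly k m) x =
      ∑ i ∈ Icc 1 k, (m i : ℝ) * i.descFactorial j * x ^ ((i : ℤ) - j) := by
  have hsmooth : ∀ i ∈ Icc 1 k, ContDiffAt ℝ j (fun x : ℝ => (m i : ℝ) * x ^ i) x :=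
    fun i _ => (contDiff_const.mul (contDiff_id.pow i)).contDiffAt
  unfold partitionPoly
  rw [iteratedDeriv_fun_sum hsmooth]
  refine sum_congr rfl fun i _ => ?_
  rw [iteratedDeriv_const_mul_field, iteratedDeriv_pow, mul_assoc,
    natCast_descFactorial_mul_pow_sub]

theorem stmt1_general (k : ℕ) (m : ℕ → ℕ) (d : ℕ) (x : ℝ) (hx : x ≠ 0) :
    iteratedDeriv d (partitionPoly k m) x =
      (∑ i ∈ Finset.Icc 1 k, (i : ℝ) ^ d * (m i : ℝ) * x ^ ((i : ℤ) - (d : ℤ))) -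
        ∑ j ∈ Finset.range d,
          (stirling2 d j : ℝ) * x ^ ((j : ℤ) - (d : ℤ)) *
            iteratedDeriv j (partitionPoly k m) x := by
  have zpow_sub_mul : ∀ i j : ℕ, x ^ ((j : ℤ) - d) * x ^ ((i : ℤ) - j) = x ^ ((i : ℤ) - d) :=
    fun i j => by rw [← zpow_add₀ hx, sub_add_sub_cancel']
  simp only [iteratedDeriv_partitionPoly, stirling2_eq_stirlingSecond, mul_sum,
    eq_sub_iff_add_eq]
  rw [sum_comm, ← sum_add_distrib]
  refine sum_congr rfl fun i _ => ?_
  rw [natCast_pow_eq_sum_stirlingSecond_mul_descFactorial, sum_range_succ, Nat.stirlingSecond_self,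
    Nat.cast_one, one_mul, add_comm, add_mul, add_mul, sum_mul, sum_mul]
  congr 1
  · refine sum_congr rfl fun j _ => ?_
    rw [← zpow_sub_mul i j]
    ring
  · ring

theorem stmt1 (k : ℕ) (m : ℕ → ℕ) (d : ℕ) (hd : d ≤ k) (x : ℝ) (hx : x ≠ 0) :
    iteratedDeriv d (partitionPoly k m) x =
      (∑ i ∈ Finset.Icc 1 k, (i : ℝ) ^ d * (m i : ℝ) * x ^ ((i : ℤ) - (d : ℤ))) -
        ∑ j ∈ Finset.range d,
          (stirling2 d j : ℝ) * x ^ ((j : ℤ) - (d : ℤ)) *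
            iteratedDeriv j (partitionPoly k m) x :=
  stmt1_general k m d x hx
end

section
/- Suppose α and β are partitions with equal lengths ℓ(α) = ℓ(β) and ∫₀¹ f̂_α = a, ∫₀¹ f̂_β = b with 0 < a < b < 1/2. Then for every c ∈ (a, b), there exists a sequence of partitions (δ_s) such that ∫₀¹ f̂_{δ_s}(x) dx → c as s → ∞. -/
/-!
Since `∫₀¹ f̂_λ = (∑_{p ∈ λ} 1/(p+1)) / ℓ(λ)`, for partitions of a common length the integral of
`k • α + l • β` is the weighted mean `(k a + l b) / (k + l)`. Taking `l = ⌊t (s+1)⌋` and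
`k = s + 1 - l` with `t = (c - a) / (b - a)`, these means `a + (b - a) l / (s+1)` tend to `c`.
-/

/-- The normalized partition polynomial of a partition, given as the multiset of its parts:
`f̂_λ(x) = (1/ℓ(λ)) ∑_{p ∈ λ} x^p`. -/
noncomputable def normPoly (lam : Multiset ℕ) (x : ℝ) : ℝ :=
  (lam.map fun p => x ^ p).sum / (Multiset.card lam : ℝ)

open Filter Topology

lemma integral_multiset_sum_pow (lam : Multiset ℕ) :
    ∫ x in (0:ℝ)..1, (lam.map fun p => x ^ p).sum =
      (lam.map fun p : ℕ => ((p : ℝ) + 1)⁻¹).sum := by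
  induction lam using Multiset.induction_on with
  | empty => simp
  | cons p s ih =>
    have hs : Continuous fun x : ℝ => (s.map fun p => x ^ p).sum :=
      continuous_multiset_sum _ fun _ _ => continuous_pow _
    simp only [Multiset.map_cons, Multiset.sum_cons]
    rw [intervalIntegral.integral_add ((continuous_pow p).intervalIntegrable _ _)
      (hs.intervalIntegrable _ _), integral_pow, ih]
    norm_num

lemma integral_normPoly (lam : Multiset ℕ) :
    ∫ x in (0:ℝ)..1, normPoly lam x =
      (lam.map fun p : ℕ => ((p : ℝ) + 1)⁻¹).sum / Multiset.card lam := by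
  simp only [normPoly, intervalIntegral.integral_div, integral_multiset_sum_pow]

lemma card_nsmul_add_nsmul {α β : Multiset ℕ} (hcard : Multiset.card α = Multiset.card β)
    (k l : ℕ) : Multiset.card (k • α + l • β) = (k + l) * Multiset.card α := by
  rw [Multiset.card_add, Multiset.card_nsmul, Multiset.card_nsmul, ← hcard, add_mul]

lemma integral_normPoly_nsmul_add_nsmul {α β : Multiset ℕ} (hα : α ≠ 0)
    (hcard : Multiset.card α = Multiset.card β) {k l : ℕ} (hkl : k + l ≠ 0) :
    ∫ x in (0:ℝ)..1, normPoly (k • α + l • β) x =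
      (k * (∫ x in (0:ℝ)..1, normPoly α x) + l * ∫ x in (0:ℝ)..1, normPoly β x) / (k + l) := by
  have hn : (Multiset.card α : ℝ) ≠ 0 := by simpa using hα
  have hkl' : (k : ℝ) + l ≠ 0 := by exact_mod_cast hkl
  simp only [integral_normPoly, card_nsmul_add_nsmul hcard, ← hcard, Multiset.map_add,
    Multiset.map_nsmul, Multiset.sum_add, Multiset.sum_nsmul]
  push_cast
  field_simp
  ring

lemma tendsto_floor_mul_succ_div_succ {t : ℝ} (ht : 0 ≤ t) :
    Tendsto (fun s : ℕ => (⌊t * (s + 1)⌋₊ : ℝ) / (s + 1)) atTop (𝓝 t) :=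
  (tendsto_nat_floor_mul_div_atTop ht).comp
    (tendsto_atTop_add_const_right _ 1 tendsto_natCast_atTop_atTop)

theorem stmt17_general (α β : Multiset ℕ)
    (hα : α ≠ 0)
    (hαp : ∀ p ∈ α, 0 < p) (hβp : ∀ p ∈ β, 0 < p)
    (hcard : Multiset.card α = Multiset.card β)
    (a b : ℝ)
    (ha : ∫ x in (0:ℝ)..1, normPoly α x = a)
    (hb : ∫ x in (0:ℝ)..1, normPoly β x = b)
    (hab : a < b)
    (c : ℝ) (hc : c ∈ Set.Ioo a b) :
    ∃ δ : ℕ → Multiset ℕ,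
      (∀ s, δ s ≠ 0 ∧ ∀ p ∈ δ s, 0 < p) ∧
      Filter.Tendsto (fun s => ∫ x in (0:ℝ)..1, normPoly (δ s) x)
        Filter.atTop (nhds c) := by
  obtain ⟨hac, hcb⟩ := hc
  set t := (c - a) / (b - a)
  have ht0 : 0 ≤ t := div_nonneg (by linarith) (by linarith)
  have ht1 : t ≤ 1 := (div_le_one (by linarith)).mpr (by linarith)
  set m : ℕ → ℕ := fun s => ⌊t * (s + 1)⌋₊
  have hm (s : ℕ) : m s ≤ s + 1 := Nat.floor_le_of_le (by push_cast; nlinarith)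
  refine ⟨fun s => (s + 1 - m s) • α + m s • β, fun s => ⟨?_, ?_⟩, ?_⟩
  · rw [← Multiset.card_pos, card_nsmul_add_nsmul hcard, Nat.sub_add_cancel (hm s)]
    exact Nat.mul_pos s.succ_pos (Multiset.card_pos.mpr hα)
  · intro p hp
    rcases Multiset.mem_add.mp hp with hp | hp
    exacts [hαp p (Multiset.mem_of_mem_nsmul hp), hβp p (Multiset.mem_of_mem_nsmul hp)]
  · have hval (s : ℕ) : ∫ x in (0:ℝ)..1, normPoly ((s + 1 - m s) • α + m s • β) x =
        a + (b - a) * ((m s : ℝ) / (s + 1)) := by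
      rw [integral_normPoly_nsmul_add_nsmul hα hcard (by omega), ha, hb,
        Nat.cast_sub (hm s)]
      push_cast
      field_simp
      ring
    have hc : a + (b - a) * t = c := by
      rw [mul_div_cancel₀ _ (sub_ne_zero.mpr hab.ne')]
      ring
    simp only [hval]
    rw [← hc]
    exact tendsto_const_nhds.add ((tendsto_floor_mul_succ_div_succ ht0).const_mul _)

theorem stmt17 (α β : Multiset ℕ)
    (hα : α ≠ 0) (hβ : β ≠ 0)
    (hαp : ∀ p ∈ α, 0 < p) (hβp : ∀ p ∈ β, 0 < p)
    (hcard : Multiset.card α = Multiset.card β)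
    (a b : ℝ)
    (ha : ∫ x in (0:ℝ)..1, normPoly α x = a)
    (hb : ∫ x in (0:ℝ)..1, normPoly β x = b)
    (h0a : 0 < a) (hab : a < b) (hb2 : b < 1 / 2)
    (c : ℝ) (hc : c ∈ Set.Ioo a b) :
    ∃ δ : ℕ → Multiset ℕ,
      (∀ s, δ s ≠ 0 ∧ ∀ p ∈ δ s, 0 < p) ∧
      Filter.Tendsto (fun s => ∫ x in (0:ℝ)..1, normPoly (δ s) x)
        Filter.atTop (nhds c) :=
  stmt17_general α β hα hαp hβp hcard a b ha hb hab c hc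
end
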